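/- arXiv:1001.3482 — 5 statements merged into one kernel-verified Lean document; each statement's English description precedes it below -/
import Mathlib

section
/- Let X be a complex Hilbert space and let T(t), t ≥ 0, be a strongly continuous semigroup on X that is uniformly bounded, i.e. ‖T(t)‖ ≤ M for all t ≥ 0. Let D be a T-invariant subspace of X and let C : D → X be a linear map that is infinite-time admissible with constant m (that is, ∫₀^∞ ‖C T(t)x‖² dt ≤ m ‖x‖² for all x ∈ D) and commutes with the semigroup (C T(t)x = T(t) C x for all x ∈ D, t ≥ 0). Then for every t > 0 and every x ∈ D one has ‖C T(t) x‖ ≤ (M √m / √t) ‖x‖. -/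
open MeasureTheory Set

/-!
Along the orbit, `C T(t) x = T(t - s) C T(s) x` for `0 < s ≤ t`, so `‖C T(t) x‖ ≤ M ‖C T(s) x‖`.
Squaring and averaging over `s ∈ (0, t]` gives `t ‖C T(t) x‖² ≤ M² ∫₀^∞ ‖C T(s) x‖² ds ≤ M² m ‖x‖²`.
-/

theorem norm_apply_semigroup_le_of_commute {𝕜 E : Type*} [NontriviallyNormedField 𝕜]
    [NormedAddCommGroup E] [NormedSpace 𝕜 E] {T : ℝ → E →L[𝕜] E} {M : ℝ}
    (hTsemi : ∀ s t : ℝ, 0 ≤ s → 0 ≤ t → T (s + t) = (T s).comp (T t))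
    (hM : ∀ t : ℝ, 0 ≤ t → ‖T t‖ ≤ M) {D : Set E} (hD : ∀ t : ℝ, 0 ≤ t → ∀ x ∈ D, T t x ∈ D)
    {C : E → E} (hCcomm : ∀ t : ℝ, 0 ≤ t → ∀ x ∈ D, C (T t x) = T t (C x))
    {s t : ℝ} (hs : 0 ≤ s) (hst : s ≤ t) {x : E} (hx : x ∈ D) :
    ‖C (T t x)‖ ≤ M * ‖C (T s x)‖ := by
  have hts : 0 ≤ t - s := sub_nonneg.2 hst
  have hsplit : T t x = T (t - s) (T s x) := by
    rw [← ContinuousLinearMap.comp_apply, ← hTsemi _ _ hts hs, sub_add_cancel]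
  calc ‖C (T t x)‖ = ‖T (t - s) (C (T s x))‖ := by rw [hsplit, hCcomm _ hts _ (hD s hs x hx)]
    _ ≤ ‖T (t - s)‖ * ‖C (T s x)‖ := (T (t - s)).le_opNorm _
    _ ≤ M * ‖C (T s x)‖ := by gcongr; exact hM _ hts

theorem mul_le_setIntegral_Ioi_of_le {g : ℝ → ℝ} {a t : ℝ} (ht : 0 ≤ t)
    (hg0 : ∀ s ∈ Ioi (0 : ℝ), 0 ≤ g s) (hg : IntegrableOn g (Ioi 0))
    (hag : ∀ s ∈ Ioc (0 : ℝ) t, a ≤ g s) :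
    t * a ≤ ∫ s in Ioi 0, g s := by
  have hvol : volume.real (Ioc (0 : ℝ) t) = t := by simp [ht]
  calc t * a = a * volume.real (Ioc (0 : ℝ) t) := by rw [hvol, mul_comm]
    _ ≤ ∫ s in Ioc 0 t, g s :=
      setIntegral_ge_of_const_le_real measurableSet_Ioc (by simp) hag
        (hg.mono_set Ioc_subset_Ioi_self)
    _ ≤ ∫ s in Ioi 0, g s :=
      setIntegral_mono_set hg ((ae_restrict_iff' measurableSet_Ioi).2 (.of_forall hg0))
        Ioc_subset_Ioi_self.eventuallyLE

theorem le_mul_sqrt_div_sqrt_mul_of_mul_sq_le {a b t M m : ℝ} (ht : 0 < t) (hM : 0 ≤ M)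
    (hm : 0 ≤ m) (hb : 0 ≤ b) (h : t * a ^ 2 ≤ M ^ 2 * (m * b ^ 2)) :
    a ≤ M * Real.sqrt m / Real.sqrt t * b := by
  have hrhs : (M * Real.sqrt m / Real.sqrt t * b) ^ 2 = M ^ 2 * (m * b ^ 2) / t := by
    rw [mul_pow, div_pow, mul_pow, Real.sq_sqrt hm, Real.sq_sqrt ht.le]
    ring
  refine abs_le_of_sq_le_sq' ?_ (by positivity) |>.2
  rw [hrhs, le_div_iff₀ ht, mul_comm]
  exact h

theorem admissible_commuting_bound_general
    {X : Type*} [NormedAddCommGroup X] [InnerProductSpace ℂ X]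
    (T : ℝ → X →L[ℂ] X) (M : ℝ)
    (hTsemi : ∀ s t : ℝ, 0 ≤ s → 0 ≤ t → T (s + t) = (T s).comp (T t))
    (hM : ∀ t : ℝ, 0 ≤ t → ‖T t‖ ≤ M)
    (D : Submodule ℂ X)
    (hD : ∀ t : ℝ, 0 ≤ t → ∀ x ∈ D, T t x ∈ D)
    (C : X →ₗ[ℂ] X) (m : ℝ)
    (hCmeas : ∀ x ∈ D, IntegrableOn (fun t => ‖C (T t x)‖ ^ 2) (Ioi (0 : ℝ)))
    (hCadm : ∀ x ∈ D, ∫ t in Ioi (0 : ℝ), ‖C (T t x)‖ ^ 2 ≤ m * ‖x‖ ^ 2)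
    (hCcomm : ∀ t : ℝ, 0 ≤ t → ∀ x ∈ D, C (T t x) = T t (C x)) :
    ∀ t : ℝ, 0 < t → ∀ x ∈ D, ‖C (T t x)‖ ≤ (M * Real.sqrt m / Real.sqrt t) * ‖x‖ := by
  intro t ht x hx
  rcases eq_or_ne x 0 with rfl | hx0
  · simp
  have hM0 : 0 ≤ M := (norm_nonneg _).trans (hM 0 le_rfl)
  have hm : 0 ≤ m := nonneg_of_mul_nonneg_left
    ((setIntegral_nonneg measurableSet_Ioi fun _ _ => by positivity).trans (hCadm x hx))
    (by positivity)
  refine le_mul_sqrt_div_sqrt_mul_of_mul_sq_le ht hM0 hm (norm_nonneg _) ?_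
  calc t * ‖C (T t x)‖ ^ 2 ≤ ∫ s in Ioi 0, M ^ 2 * ‖C (T s x)‖ ^ 2 := by
        refine mul_le_setIntegral_Ioi_of_le ht.le (fun _ _ => by positivity)
          ((hCmeas x hx).const_mul _) fun s hs => ?_
        rw [← mul_pow]
        gcongr
        exact norm_apply_semigroup_le_of_commute hTsemi hM hD hCcomm hs.1.le hs.2 hx
    _ = M ^ 2 * ∫ s in Ioi 0, ‖C (T s x)‖ ^ 2 := integral_const_mul _ _
    _ ≤ M ^ 2 * (m * ‖x‖ ^ 2) := by gcongr; exact hCadm x hx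

/-- Let `X` be a complex Hilbert space and `T t`, `t ≥ 0`, a strongly
continuous semigroup on `X` which is uniformly bounded by `M`. If `D` is a `T`-invariant
subspace and `C` is linear on `D`, infinite-time admissible with constant `m` and commuting
with the semigroup, then `‖C (T t x)‖ ≤ (M * √m / √t) * ‖x‖` for all `t > 0`, `x ∈ D`. -/
theorem admissible_commuting_bound
    {X : Type*} [NormedAddCommGroup X] [InnerProductSpace ℂ X] [CompleteSpace X]
    (T : ℝ → X →L[ℂ] X) (M : ℝ)
    (hT0 : T 0 = 1)
    (hTsemi : ∀ s t : ℝ, 0 ≤ s → 0 ≤ t → T (s + t) = (T s).comp (T t))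
    (hTcont : ∀ x : X, ContinuousOn (fun t => T t x) (Ici (0 : ℝ)))
    (hM : ∀ t : ℝ, 0 ≤ t → ‖T t‖ ≤ M)
    (D : Submodule ℂ X)
    (hD : ∀ t : ℝ, 0 ≤ t → ∀ x ∈ D, T t x ∈ D)
    (C : X →ₗ[ℂ] X) (m : ℝ)
    (hCmeas : ∀ x ∈ D, IntegrableOn (fun t => ‖C (T t x)‖ ^ 2) (Ioi (0 : ℝ)))
    (hCadm : ∀ x ∈ D, ∫ t in Ioi (0 : ℝ), ‖C (T t x)‖ ^ 2 ≤ m * ‖x‖ ^ 2)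
    (hCcomm : ∀ t : ℝ, 0 ≤ t → ∀ x ∈ D, C (T t x) = T t (C x)) :
    ∀ t : ℝ, 0 < t → ∀ x ∈ D, ‖C (T t x)‖ ≤ (M * Real.sqrt m / Real.sqrt t) * ‖x‖ :=
  admissible_commuting_bound_general T M hTsemi hM D hD C m hCmeas hCadm hCcomm
end

section
/- Let X be a complex Hilbert space, T(t), t ≥ 0, an exponentially stable strongly continuous semigroup on X, and R : X → X the bounded operator R x = ∫₀^∞ T(t)x dt. Assume R is injective, let D = range(R), and let C : D → X be a linear map such that: (i) C ∘ R : X → X is bounded, i.e. there is K with ‖C(R x)‖ ≤ K‖x‖ for all x ∈ X; (ii) C T(t)y = T(t) C y for all y ∈ D, t ≥ 0; (iii) C(R y) = R(C y) for all y ∈ D. Define the Lebesgue extension C_L by: x ∈ D(C_L) iff the limit C_L x := lim_{t↓0} (1/t) C(∫₀^t T(τ)x dτ) exists (note ∫₀^t T(τ)x dτ = R x - R(T(t)x) ∈ D). Then C_L is a closed operator: if x_n ∈ D(C_L), x_n → x in X and C_L x_n → z in X, then x ∈ D(C_L) and C_L x = z. -/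
open MeasureTheory Set Filter intervalIntegral Topology

/-!
Put `B = C ∘ R`, a bounded operator commuting with `T`, so that
`C (∫₀ᵗ T τ v dτ) = B (v - T t v) =: ψ_v t`. The semigroup law gives the cocycle identity
`ψ_v (s + h) - ψ_v s = T s (ψ_v h)`; hence if `ψ_v h / h → l` as `h ↓ 0`, then `ψ_v` has right
derivative `T s l` at every `s ≥ 0` and `ψ_v t = ∫₀ᵗ T s l ds`. Both sides of this identity are
continuous in `(v, l)`, so it passes to the limit along `(u n, l n) → (x, z)`; dividing by `t` and
letting `t ↓ 0` then gives `C_L x = z`.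
-/

theorem setIntegral_Ioi_comp_add_right {E : Type*} [NormedAddCommGroup E] [NormedSpace ℝ E]
    (g : ℝ → E) (t : ℝ) : ∫ τ in Ioi 0, g (τ + t) = ∫ τ in Ioi t, g τ := by
  have hpre : (· + t) ⁻¹' Ioi t = Ioi 0 := by ext τ; simp
  rw [← hpre]
  exact (measurePreserving_add_right volume t).setIntegral_preimage_emb
    (MeasurableEquiv.addRight t).measurableEmbedding g (Ioi t)

theorem tendsto_inv_smul_intervalIntegral_nhdsGT_zero {E : Type*} [NormedAddCommGroup E]
    [NormedSpace ℝ E] [CompleteSpace E] {f : ℝ → E} (hf : ContinuousOn f (Ici 0)) :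
    Tendsto (fun h => h⁻¹ • ∫ s in 0..h, f s) (𝓝[>] 0) (𝓝 (f 0)) := by
  have hderiv : HasDerivWithinAt (fun u => ∫ s in 0..u, f s) (f 0) (Ioi 0) 0 :=
    (integral_hasDerivWithinAt_right IntervalIntegrable.refl
      ((hf.mono Ioi_subset_Ici_self).stronglyMeasurableAtFilter_nhdsWithin measurableSet_Ioi 0)
      ((hf 0 self_mem_Ici).mono Ioi_subset_Ici_self) (s := Ici 0)).mono Ioi_subset_Ici_self
  refine ((hasDerivWithinAt_iff_tendsto_slope' self_notMem_Ioi).1 hderiv).congr fun h => ?_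
  simp [slope_def_module]

section Semigroup

variable {X : Type*} [NormedAddCommGroup X] [NormedSpace ℂ X]
  {T : ℝ → X →L[ℂ] X}

theorem integrableOn_Ioi_apply_of_norm_le_exp {M ω : ℝ} (hω : 0 < ω)
    (hTcont : ∀ x, ContinuousOn (fun t => T t x) (Ici 0))
    (hTexp : ∀ t, 0 ≤ t → ‖T t‖ ≤ M * Real.exp (-ω * t)) (v : X) :
    IntegrableOn (fun t => T t v) (Ioi 0) := by
  refine Integrable.mono' (((exp_neg_integrableOn_Ioi 0 hω).const_mul M).mul_const ‖v‖)
    (((hTcont v).mono Ioi_subset_Ici_self).aestronglyMeasurable measurableSet_Ioi) ?_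
  exact (ae_restrict_iff' measurableSet_Ioi).2 <| ae_of_all _ fun τ (hτ : τ ∈ Ioi 0) =>
    (T τ).le_of_opNorm_le (hTexp τ (le_of_lt hτ)) v

theorem setIntegral_Ioi_apply_comp
    (hTsemi : ∀ s t : ℝ, 0 ≤ s → 0 ≤ t → T (s + t) = (T s).comp (T t)) {t : ℝ} (ht : 0 ≤ t)
    (v : X) : ∫ τ in Ioi 0, T τ (T t v) = ∫ τ in Ioi t, T τ v := by
  rw [← setIntegral_Ioi_comp_add_right (fun τ => T τ v)]
  refine setIntegral_congr_fun measurableSet_Ioi fun τ (hτ : 0 < τ) => ?_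
  rw [hTsemi τ t (le_of_lt hτ) ht, ContinuousLinearMap.comp_apply]

theorem apply_setIntegral_Ioi [CompleteSpace X]
    (hTsemi : ∀ s t : ℝ, 0 ≤ s → 0 ≤ t → T (s + t) = (T s).comp (T t)) {t : ℝ} (ht : 0 ≤ t)
    {v : X} (hv : IntegrableOn (fun τ => T τ v) (Ioi 0)) :
    T t (∫ τ in Ioi 0, T τ v) = ∫ τ in Ioi t, T τ v := by
  rw [← (T t).integral_comp_comm hv,
    ← setIntegral_Ioi_comp_add_right (fun τ => T τ v)]
  refine setIntegral_congr_fun measurableSet_Ioi fun τ (hτ : 0 < τ) => ?_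
  rw [add_comm, hTsemi t τ ht (le_of_lt hτ), ContinuousLinearMap.comp_apply]

theorem continuous_intervalIntegral_apply {M : ℝ}
    (hTcont : ∀ x, ContinuousOn (fun t => T t x) (Ici 0)) (hTbdd : ∀ t, 0 ≤ t → ‖T t‖ ≤ M)
    {t : ℝ} (ht : 0 ≤ t) : Continuous fun v => ∫ s in 0..t, T s v := by
  have hint (v : X) : IntervalIntegrable (fun s => T s v) volume 0 t :=
    ((hTcont v).mono Icc_subset_Ici_self).intervalIntegrable_of_Icc ht
  refine (LipschitzWith.of_dist_le_mul fun v w => ?_).continuous (K := (M * t).toNNReal)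
  rw [dist_eq_norm, dist_eq_norm, ← integral_sub (hint v) (hint w)]
  calc ‖∫ s in 0..t, (T s v - T s w)‖ ≤ M * ‖v - w‖ * |t - 0| := by
        refine norm_integral_le_of_norm_le_const fun s hs => ?_
        rw [← map_sub]
        exact (T s).le_of_opNorm_le (hTbdd s (uIoc_of_le ht ▸ hs).1.le) _
    _ = M * t * ‖v - w‖ := by rw [sub_zero, abs_of_nonneg ht]; ring
    _ ≤ _ := by gcongr; exact Real.le_coe_toNNReal _

theorem hasDerivWithinAt_Ioi_of_sub_eq_apply {A : X →L[ℂ] X} {ψ : ℝ → X} {l : X} {s : ℝ}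
    (hψ : ∀ h, 0 < h → ψ (s + h) - ψ s = A (ψ h))
    (hlim : Tendsto (fun h => h⁻¹ • ψ h) (𝓝[>] 0) (𝓝 l)) :
    HasDerivWithinAt ψ (A l) (Ioi s) s := by
  rw [hasDerivWithinAt_iff_tendsto_slope' self_notMem_Ioi, ← add_zero s, ← map_add_left_nhdsGT,
    tendsto_map'_iff, add_zero]
  refine ((A.continuous.tendsto l).comp hlim).congr' ?_
  filter_upwards [self_mem_nhdsWithin] with h hh
  simp [slope_def_module, hψ h hh, A.map_smul_of_tower]

theorem eq_intervalIntegral_of_sub_eq_apply [CompleteSpace X] {ψ : ℝ → X} {l : X}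
    (hψ : ContinuousOn ψ (Ici 0)) (hψ0 : ψ 0 = 0) (hTl : ContinuousOn (fun s => T s l) (Ici 0))
    (hcocycle : ∀ s h, 0 ≤ s → 0 < h → ψ (s + h) - ψ s = T s (ψ h))
    (hlim : Tendsto (fun h => h⁻¹ • ψ h) (𝓝[>] 0) (𝓝 l)) {t : ℝ} (ht : 0 ≤ t) :
    ψ t = ∫ s in 0..t, T s l := by
  rw [integral_eq_sub_of_hasDeriv_right_of_le ht (hψ.mono Icc_subset_Ici_self)
    (fun s hs => hasDerivWithinAt_Ioi_of_sub_eq_apply (hcocycle s · hs.1.le) hlim)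
    ((hTl.mono Icc_subset_Ici_self).intervalIntegrable_of_Icc ht), hψ0, sub_zero]

theorem sub_apply_eq_intervalIntegral_of_commute [CompleteSpace X] {B : X →L[ℂ] X}
    (hT0 : T 0 = 1) (hTsemi : ∀ s t : ℝ, 0 ≤ s → 0 ≤ t → T (s + t) = (T s).comp (T t))
    (hTcont : ∀ x, ContinuousOn (fun t => T t x) (Ici 0))
    (hBT : ∀ t, 0 ≤ t → ∀ w, B (T t w) = T t (B w)) {v l : X}
    (hlim : Tendsto (fun h => h⁻¹ • B (v - T h v)) (𝓝[>] 0) (𝓝 l)) {t : ℝ} (ht : 0 ≤ t) :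
    B (v - T t v) = ∫ s in 0..t, T s l := by
  refine eq_intervalIntegral_of_sub_eq_apply (ψ := fun s => B (v - T s v))
    (B.continuous.comp_continuousOn (continuousOn_const.sub (hTcont v))) (by simp [hT0])
    (hTcont l) (fun s h hs hh => ?_) hlim ht
  rw [← map_sub, hTsemi s h hs hh.le, ContinuousLinearMap.comp_apply, ← hBT s hs, map_sub (T s)]
  congr 1
  abel

theorem tendsto_inv_smul_sub_of_commute [CompleteSpace X] {M : ℝ} {B : X →L[ℂ] X}
    (hT0 : T 0 = 1) (hTsemi : ∀ s t : ℝ, 0 ≤ s → 0 ≤ t → T (s + t) = (T s).comp (T t))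
    (hTcont : ∀ x, ContinuousOn (fun t => T t x) (Ici 0)) (hTbdd : ∀ t, 0 ≤ t → ‖T t‖ ≤ M)
    (hBT : ∀ t, 0 ≤ t → ∀ w, B (T t w) = T t (B w))
    {ι : Type*} {F : Filter ι} [F.NeBot] {u l : ι → X} {x z : X}
    (hu : ∀ i, Tendsto (fun h => h⁻¹ • B (u i - T h (u i))) (𝓝[>] 0) (𝓝 (l i)))
    (hux : Tendsto u F (𝓝 x)) (hlz : Tendsto l F (𝓝 z)) :
    Tendsto (fun h => h⁻¹ • B (x - T h x)) (𝓝[>] 0) (𝓝 z) := by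
  have hx (t : ℝ) (ht : 0 ≤ t) : B (x - T t x) = ∫ s in 0..t, T s z := by
    have hlhs : Tendsto (fun i => B (u i - T t (u i))) F (𝓝 (B (x - T t x))) :=
      ((B.continuous.comp (continuous_id.sub (T t).continuous)).tendsto x).comp hux
    have hrhs := ((continuous_intervalIntegral_apply hTcont hTbdd ht).tendsto z).comp hlz
    refine tendsto_nhds_unique hlhs (hrhs.congr fun i => ?_)
    exact (sub_apply_eq_intervalIntegral_of_commute hT0 hTsemi hTcont hBT (hu i) ht).symm
  have hz := tendsto_inv_smul_intervalIntegral_nhdsGT_zero (hTcont z)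
  rw [hT0, one_apply_eq_self] at hz
  refine hz.congr' ?_
  filter_upwards [self_mem_nhdsWithin] with h (hh : 0 < h)
  rw [hx h hh.le]

end Semigroup

theorem lebesgue_extension_closed_general
    {X : Type*} [NormedAddCommGroup X] [InnerProductSpace ℂ X] [CompleteSpace X]
    (T : ℝ → X →L[ℂ] X) (M ω : ℝ) (hω : 0 < ω)
    (hT0 : T 0 = 1)
    (hTsemi : ∀ s t : ℝ, 0 ≤ s → 0 ≤ t → T (s + t) = (T s).comp (T t))
    (hTcont : ∀ x : X, ContinuousOn (fun t => T t x) (Ici (0 : ℝ)))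
    (hTexp : ∀ t : ℝ, 0 ≤ t → ‖T t‖ ≤ M * Real.exp (-ω * t))
    (R : X →L[ℂ] X)
    (hR : ∀ x : X, R x = ∫ t in Ioi (0 : ℝ), T t x)
    (C : X →ₗ[ℂ] X) (K : ℝ)
    (hCR : ∀ x : X, ‖C (R x)‖ ≤ K * ‖x‖)
    (hCcomm : ∀ t : ℝ, 0 ≤ t → ∀ y ∈ Set.range R, C (T t y) = T t (C y)) :
    ∀ (u : ℕ → X) (l : ℕ → X) (x z : X),
      (∀ n, Tendsto (fun t : ℝ => (1 / t) • C (∫ τ in (0 : ℝ)..t, T τ (u n)))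
        (nhdsWithin 0 (Ioi (0 : ℝ))) (nhds (l n))) →
      Tendsto u atTop (nhds x) → Tendsto l atTop (nhds z) →
      Tendsto (fun t : ℝ => (1 / t) • C (∫ τ in (0 : ℝ)..t, T τ x))
        (nhdsWithin 0 (Ioi (0 : ℝ))) (nhds z) := by
  intro u l x z hu hux hlz
  have hint := integrableOn_Ioi_apply_of_norm_le_exp hω hTcont hTexp
  have hTbdd (t : ℝ) (ht : 0 ≤ t) : ‖T t‖ ≤ M := by
    have hM : 0 ≤ M := by simpa using (norm_nonneg _).trans (hTexp 0 le_rfl)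
    refine (hTexp t ht).trans (mul_le_of_le_one_right hM (Real.exp_le_one_iff.2 ?_))
    nlinarith
  have hRT (t : ℝ) (ht : 0 ≤ t) (v : X) : R (T t v) = T t (R v) := by
    rw [hR, hR, setIntegral_Ioi_apply_comp hTsemi ht, apply_setIntegral_Ioi hTsemi ht (hint v)]
  let B : X →L[ℂ] X := (C ∘ₗ (R : X →ₗ[ℂ] X)).mkContinuous K hCR
  have hBT (t : ℝ) (ht : 0 ≤ t) (w : X) : B (T t w) = T t (B w) :=
    (congrArg C (hRT t ht w)).trans (hCcomm t ht (R w) ⟨w, rfl⟩)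
  have hCB (v : X) : (fun t : ℝ => t⁻¹ • B (v - T t v)) =ᶠ[𝓝[>] 0]
      fun t => (1 / t) • C (∫ τ in (0 : ℝ)..t, T τ v) := by
    filter_upwards [self_mem_nhdsWithin] with t (ht : 0 < t)
    rw [one_div, ← integral_Ioi_sub_Ioi (hint v) ht.le, ← hR,
      ← setIntegral_Ioi_apply_comp hTsemi ht.le, ← hR, ← map_sub]
    rfl
  exact (tendsto_inv_smul_sub_of_commute hT0 hTsemi hTcont hTbdd hBT
    (fun n => (hu n).congr' (hCB (u n)).symm) hux hlz).congr' (hCB x)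

/-- The Lebesgue extension
`C_L x = lim_{t ↓ 0} (1/t) C (∫₀^t T τ x dτ)` of an operator `C` on `D = range R`
(`R = -A⁻¹ = ∫₀^∞ T t dt`) which commutes with the exponentially stable semigroup `T`,
commutes with `R`, and is such that `C ∘ R` is bounded, is a closed operator. -/
theorem lebesgue_extension_closed
    {X : Type*} [NormedAddCommGroup X] [InnerProductSpace ℂ X] [CompleteSpace X]
    (T : ℝ → X →L[ℂ] X) (M ω : ℝ) (hM : 1 ≤ M) (hω : 0 < ω)
    (hT0 : T 0 = 1)
    (hTsemi : ∀ s t : ℝ, 0 ≤ s → 0 ≤ t → T (s + t) = (T s).comp (T t))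
    (hTcont : ∀ x : X, ContinuousOn (fun t => T t x) (Ici (0 : ℝ)))
    (hTexp : ∀ t : ℝ, 0 ≤ t → ‖T t‖ ≤ M * Real.exp (-ω * t))
    (R : X →L[ℂ] X)
    (hR : ∀ x : X, R x = ∫ t in Ioi (0 : ℝ), T t x)
    (hRinj : Function.Injective R)
    (C : X →ₗ[ℂ] X) (K : ℝ)
    (hCR : ∀ x : X, ‖C (R x)‖ ≤ K * ‖x‖)
    (hCcomm : ∀ t : ℝ, 0 ≤ t → ∀ y ∈ Set.range R, C (T t y) = T t (C y))
    (hCRcomm : ∀ y ∈ Set.range R, C (R y) = R (C y)) :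
    ∀ (u : ℕ → X) (l : ℕ → X) (x z : X),
      (∀ n, Tendsto (fun t : ℝ => (1 / t) • C (∫ τ in (0 : ℝ)..t, T τ (u n)))
        (nhdsWithin 0 (Ioi (0 : ℝ))) (nhds (l n))) →
      Tendsto u atTop (nhds x) → Tendsto l atTop (nhds z) →
      Tendsto (fun t : ℝ => (1 / t) • C (∫ τ in (0 : ℝ)..t, T τ x))
        (nhdsWithin 0 (Ioi (0 : ℝ))) (nhds z) :=
  lebesgue_extension_closed_general T M ω hω hT0 hTsemi hTcont hTexp R hR C K hCR hCcomm
end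

section
/- Let X be a complex Hilbert space, T(t), t ≥ 0, an exponentially stable strongly continuous semigroup on X, and R : X → X the bounded operator R x = ∫₀^∞ T(t)x dt. Assume R is injective, let D = range(R), and let C : D → X be a linear map such that: (i) C ∘ R is bounded on X; (ii) C T(t)y = T(t) C y for all y ∈ D, t ≥ 0; (iii) C(R y) = R(C y) for all y ∈ D. For λ > 0 define R_λ x = ∫₀^∞ e^{-λ t} T(t)x dt, and assume R_λ(X) ⊆ D for every λ > 0. Define the Lambda extension C_Λ by: x ∈ D(C_Λ) iff the limit C_Λ x := lim_{λ→∞} λ C(R_λ x) exists. Then C_Λ is a closed operator: if x_n ∈ D(C_Λ), x_n → x in X and C_Λ x_n → z in X, then x ∈ D(C_Λ) and C_Λ x = z. -/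
/-!
Write `R_λ` for the Laplace transform of the semigroup, so that `R = R_0`. Fubini gives the
resolvent identity `R - R_λ = λ R R_λ`, i.e. `R_λ = R (1 - λ R_λ)`; hence `C R_λ = (C R)(1 - λ R_λ)`
is bounded for `λ > 0`. As `C` commutes with `T`, the bounded operator `C R` commutes with every
`R_μ`, so `C R_μ (λ R_λ x) = R_μ (λ C R_λ x)`. Since `λ R_λ → 1` strongly, letting `λ → ∞` shows
that `λ C R_λ x → z` implies `C R_μ x = R_μ z` for all `μ > 0`, and conversely this identity gives
`λ C R_λ x = λ R_λ z → z`. So the graph of `C_Λ` is the intersection over `μ > 0` of the closed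
sets `{(x, z) | C R_μ x = R_μ z}`.
-/

open MeasureTheory Set Filter Topology

theorem integral_Ioo_exp_neg_mul {lam : ℝ} (hlam : 0 < lam) {u : ℝ} (hu : 0 ≤ u) :
    ∫ s in Ioo 0 u, Real.exp (-lam * s) = (1 - Real.exp (-lam * u)) / lam := by
  rw [← integral_Ioc_eq_integral_Ioo, ← intervalIntegral.integral_of_le hu,
    intervalIntegral.integral_comp_mul_left (fun s => Real.exp s) (neg_ne_zero.2 hlam.ne'),
    integral_exp]
  field_simp
  simp [hlam.ne']

section

variable {X : Type*} [NormedAddCommGroup X] [NormedSpace ℂ X]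

structure IsExpStableSemigroup (T : ℝ → X →L[ℂ] X) (M ω : ℝ) : Prop where
  map_zero' : T 0 = 1
  map_add' : ∀ s t : ℝ, 0 ≤ s → 0 ≤ t → T (s + t) = (T s).comp (T t)
  continuousOn : ∀ x : X, ContinuousOn (fun t => T t x) (Ici 0)
  norm_le : ∀ t : ℝ, 0 ≤ t → ‖T t‖ ≤ M * Real.exp (-ω * t)
  pos : 0 < ω

/-- For `lam > 0` this is the resolvent `R_λ = (λ - A)⁻¹`, and `laplace T 0` is `R = -A⁻¹`. -/
noncomputable def laplace (T : ℝ → X →L[ℂ] X) (lam : ℝ) (x : X) : X :=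
  ∫ t in Ioi 0, Real.exp (-lam * t) • T t x

theorem laplace_zero (T : ℝ → X →L[ℂ] X) (x : X) :
    laplace T 0 x = ∫ t in Ioi 0, T t x := by
  simp [laplace]

theorem smul_laplace_eq_integral (T : ℝ → X →L[ℂ] X) {lam : ℝ} (hlam : 0 < lam)
    (x : X) : lam • laplace T lam x = ∫ s in Ioi 0, Real.exp (-s) • T (lam⁻¹ * s) x := by
  have := integral_comp_mul_left_Ioi' (fun s => Real.exp (-s) • T (lam⁻¹ * s) x) 0 hlam
  simp only [mul_zero, inv_mul_cancel_left₀ hlam.ne', ← neg_mul] at this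
  rw [laplace, this]

namespace IsExpStableSemigroup

variable {T : ℝ → X →L[ℂ] X} {M ω : ℝ}

theorem const_nonneg (hT : IsExpStableSemigroup T M ω) : 0 ≤ M := by
  simpa using (norm_nonneg _).trans (hT.norm_le 0 le_rfl)

theorem norm_apply_le (hT : IsExpStableSemigroup T M ω) {t : ℝ} (ht : 0 ≤ t) (x : X) :
    ‖T t x‖ ≤ M * ‖x‖ * Real.exp (-ω * t) := by
  simpa only [mul_right_comm] using (T t).le_of_opNorm_le (hT.norm_le t ht) x

theorem norm_apply_le_mul_norm (hT : IsExpStableSemigroup T M ω) {t : ℝ} (ht : 0 ≤ t) (x : X) :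
    ‖T t x‖ ≤ M * ‖x‖ := by
  refine (hT.norm_apply_le ht x).trans (mul_le_of_le_one_right (by positivity [hT.const_nonneg]) ?_)
  exact Real.exp_le_one_iff.2 (by nlinarith [hT.pos])

theorem apply_comm (hT : IsExpStableSemigroup T M ω) {s t : ℝ} (hs : 0 ≤ s) (ht : 0 ≤ t)
    (x : X) : T s (T t x) = T t (T s x) := by
  rw [← ContinuousLinearMap.comp_apply, ← hT.map_add' s t hs ht, add_comm,
    hT.map_add' t s ht hs, ContinuousLinearMap.comp_apply]

theorem aestronglyMeasurable_apply (hT : IsExpStableSemigroup T M ω) (x : X) :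
    AEStronglyMeasurable (fun t => T t x) (volume.restrict (Ioi 0)) :=
  ((hT.continuousOn x).mono Ioi_subset_Ici_self).aestronglyMeasurable measurableSet_Ioi

theorem norm_exp_smul_apply_le (hT : IsExpStableSemigroup T M ω) {lam t : ℝ} (hlam : 0 ≤ lam)
    (ht : 0 ≤ t) (x : X) :
    ‖Real.exp (-lam * t) • T t x‖ ≤ M * ‖x‖ * Real.exp (-ω * t) := by
  rw [norm_smul, Real.norm_of_nonneg (Real.exp_pos _).le]
  refine (mul_le_of_le_one_left (norm_nonneg _) ?_).trans (hT.norm_apply_le ht x)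
  exact Real.exp_le_one_iff.2 (by nlinarith)

theorem integrableOn_exp_smul_apply (hT : IsExpStableSemigroup T M ω) {lam : ℝ}
    (hlam : 0 ≤ lam) (x : X) : IntegrableOn (fun t => Real.exp (-lam * t) • T t x) (Ioi 0) := by
  refine Integrable.mono' ((exp_neg_integrableOn_Ioi 0 hT.pos).const_mul (M * ‖x‖)) ?_ ?_
  · exact (Real.continuous_exp.comp (continuous_const.mul continuous_id)).aestronglyMeasurable.smul
      (hT.aestronglyMeasurable_apply x)
  · filter_upwards [ae_restrict_mem measurableSet_Ioi] with t ht
    exact hT.norm_exp_smul_apply_le hlam (le_of_lt ht) x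

noncomputable def laplaceCLM (hT : IsExpStableSemigroup T M ω) {lam : ℝ} (hlam : 0 ≤ lam) :
    X →L[ℂ] X :=
  LinearMap.mkContinuous
    { toFun := laplace T lam
      map_add' := fun x y => by
        simp only [laplace, map_add, smul_add]
        exact integral_add (hT.integrableOn_exp_smul_apply hlam x)
          (hT.integrableOn_exp_smul_apply hlam y)
      map_smul' := fun c x => by
        simp only [laplace, map_smul, RingHom.id_apply, ← integral_smul]
        simp_rw [smul_comm c] }
    (∫ t in Ioi 0, M * Real.exp (-ω * t))
    (fun x => by
      rw [← integral_mul_const]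
      refine norm_integral_le_of_norm_le
        (((exp_neg_integrableOn_Ioi 0 hT.pos).const_mul M).mul_const ‖x‖) ?_
      filter_upwards [ae_restrict_mem measurableSet_Ioi] with t ht
      simpa only [mul_right_comm] using hT.norm_exp_smul_apply_le hlam (le_of_lt ht) x)

@[simp]
theorem laplaceCLM_apply (hT : IsExpStableSemigroup T M ω) {lam : ℝ} (hlam : 0 ≤ lam) (x : X) :
    hT.laplaceCLM hlam x = laplace T lam x :=
  rfl

theorem laplace_smul_real (hT : IsExpStableSemigroup T M ω) {lam : ℝ} (hlam : 0 ≤ lam)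
    (c : ℝ) (x : X) : laplace T lam (c • x) = c • laplace T lam x :=
  (hT.laplaceCLM hlam).map_smul_of_tower c x

theorem continuous_laplace (hT : IsExpStableSemigroup T M ω) {lam : ℝ} (hlam : 0 ≤ lam) :
    Continuous (laplace T lam) :=
  (hT.laplaceCLM hlam).continuous

variable [CompleteSpace X]

theorem map_laplace_of_commute (hT : IsExpStableSemigroup T M ω) {lam : ℝ} (hlam : 0 ≤ lam)
    (L : X →L[ℂ] X) (hL : ∀ t, 0 ≤ t → ∀ x, L (T t x) = T t (L x)) (x : X) :
    L (laplace T lam x) = laplace T lam (L x) := by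
  rw [laplace, laplace, ← L.integral_comp_comm (hT.integrableOn_exp_smul_apply hlam x)]
  refine setIntegral_congr_fun measurableSet_Ioi fun t ht => ?_
  simp only [L.map_smul_of_tower, hL t (le_of_lt ht)]

theorem apply_laplace (hT : IsExpStableSemigroup T M ω) {lam s : ℝ} (hlam : 0 ≤ lam)
    (hs : 0 ≤ s) (x : X) : T s (laplace T lam x) = laplace T lam (T s x) :=
  hT.map_laplace_of_commute hlam (T s) (fun _ ht y => hT.apply_comm hs ht y) x

theorem laplace_comm (hT : IsExpStableSemigroup T M ω) {lam mu : ℝ} (hlam : 0 ≤ lam)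
    (hmu : 0 ≤ mu) (x : X) : laplace T lam (laplace T mu x) = laplace T mu (laplace T lam x) :=
  (hT.map_laplace_of_commute hlam (hT.laplaceCLM hmu)
    (fun _ ht y => (hT.apply_laplace hmu ht y).symm) x).symm

theorem apply_laplace_zero (hT : IsExpStableSemigroup T M ω) {s : ℝ} (hs : 0 ≤ s) (x : X) :
    T s (laplace T 0 x) = ∫ u in Ioi s, T u x := by
  have hshift := (measurePreserving_add_right volume s).setIntegral_preimage_emb
    (measurableEmbedding_addRight s) (fun u => T u x) (Ioi s)
  rw [preimage_add_const_Ioi, sub_self] at hshift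
  rw [hT.apply_laplace le_rfl hs, laplace_zero, ← hshift]
  refine setIntegral_congr_fun measurableSet_Ioi fun t ht => ?_
  rw [hT.map_add' t s (le_of_lt ht) hs, ContinuousLinearMap.comp_apply]

theorem laplace_laplace_zero (hT : IsExpStableSemigroup T M ω) {lam : ℝ} (hlam : 0 < lam)
    (x : X) : laplace T lam (laplace T 0 x) =
      ∫ u in Ioi 0, ((1 - Real.exp (-lam * u)) / lam) • T u x := by
  set F : ℝ × ℝ → X := {p | p.1 < p.2}.indicator fun p => Real.exp (-lam * p.1) • T p.2 x
  have hF_int : Integrable F ((volume.restrict (Ioi 0)).prod (volume.restrict (Ioi 0))) := by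
    refine Integrable.mono' ((exp_neg_integrableOn_Ioi 0 hlam).mul_prod
      ((exp_neg_integrableOn_Ioi 0 hT.pos).const_mul (M * ‖x‖))) ?_ ?_
    · refine AEStronglyMeasurable.indicator ?_ (measurableSet_lt measurable_fst measurable_snd)
      exact (Real.continuous_exp.comp (continuous_const.mul continuous_fst)).aestronglyMeasurable
        |>.smul (hT.aestronglyMeasurable_apply x).comp_snd
    · rw [Measure.prod_restrict]
      filter_upwards [ae_restrict_mem (measurableSet_Ioi.prod measurableSet_Ioi)] with p hp
      refine (norm_indicator_le_norm_self _ _).trans ?_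
      rw [norm_smul, Real.norm_of_nonneg (Real.exp_pos _).le]
      exact mul_le_mul_of_nonneg_left (hT.norm_apply_le (le_of_lt hp.2) x) (Real.exp_pos _).le
  have hinner_u : ∀ s ∈ Ioi (0 : ℝ),
      Real.exp (-lam * s) • T s (laplace T 0 x) = ∫ u in Ioi 0, F (s, u) := by
    intro s hs
    have : (fun u => F (s, u)) = (Ioi s).indicator fun u => Real.exp (-lam * s) • T u x := by
      ext u; simp [F, indicator_apply]
    rw [this, setIntegral_indicator measurableSet_Ioi, inter_eq_right.2 (Ioi_subset_Ioi hs.le),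
      integral_smul, hT.apply_laplace_zero hs.le]
  have hinner_s : ∀ u ∈ Ioi (0 : ℝ),
      ∫ s in Ioi 0, F (s, u) = ((1 - Real.exp (-lam * u)) / lam) • T u x := by
    intro u hu
    have : (fun s => F (s, u)) = (Iio u).indicator fun s => Real.exp (-lam * s) • T u x := by
      ext s; simp [F, indicator_apply]
    rw [this, setIntegral_indicator measurableSet_Iio, Ioi_inter_Iio, integral_smul_const,
      integral_Ioo_exp_neg_mul hlam hu.le]
  rw [laplace, setIntegral_congr_fun measurableSet_Ioi hinner_u,
    integral_integral_swap (f := fun s u => F (s, u)) hF_int,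
    setIntegral_congr_fun measurableSet_Ioi hinner_s]

theorem laplace_zero_sub_laplace (hT : IsExpStableSemigroup T M ω) {lam : ℝ} (hlam : 0 < lam)
    (x : X) : laplace T 0 x - laplace T lam x = lam • laplace T lam (laplace T 0 x) := by
  have h0 : IntegrableOn (fun t => T t x) (Ioi 0) := by
    simpa using hT.integrableOn_exp_smul_apply le_rfl x
  rw [hT.laplace_laplace_zero hlam, laplace_zero, laplace,
    ← integral_sub h0 (hT.integrableOn_exp_smul_apply hlam.le x), ← integral_smul]
  refine setIntegral_congr_fun measurableSet_Ioi fun u _ => ?_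
  rw [smul_smul, mul_div_cancel₀ _ hlam.ne', sub_smul, one_smul]

theorem laplace_eq_laplace_zero (hT : IsExpStableSemigroup T M ω) {lam : ℝ} (hlam : 0 < lam)
    (x : X) : laplace T lam x = laplace T 0 (x - lam • laplace T lam x) := by
  rw [← hT.laplaceCLM_apply le_rfl, map_sub, ContinuousLinearMap.map_smul_of_tower,
    hT.laplaceCLM_apply, hT.laplaceCLM_apply, hT.laplace_comm le_rfl hlam.le,
    ← hT.laplace_zero_sub_laplace hlam, sub_sub_cancel]

theorem tendsto_smul_laplace (hT : IsExpStableSemigroup T M ω) (x : X) :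
    Tendsto (fun lam : ℝ => lam • laplace T lam x) atTop (𝓝 x) := by
  have hdom : Tendsto (fun lam : ℝ => ∫ s in Ioi 0, Real.exp (-s) • T (lam⁻¹ * s) x) atTop
      (𝓝 (∫ s in Ioi 0, Real.exp (-s) • x)) := by
    refine tendsto_integral_filter_of_dominated_convergence (fun s => Real.exp (-s) * (M * ‖x‖))
      ?_ ?_ ?_ ?_
    · filter_upwards [eventually_gt_atTop 0] with lam hlam
      refine ContinuousOn.aestronglyMeasurable ?_ measurableSet_Ioi
      refine (Real.continuous_exp.comp continuous_neg).continuousOn.smul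
        ((hT.continuousOn x).comp (continuousOn_const.mul continuousOn_id) fun s hs => ?_)
      exact mul_nonneg (inv_nonneg.2 hlam.le) (le_of_lt hs)
    · filter_upwards [eventually_gt_atTop 0] with lam hlam
      filter_upwards [ae_restrict_mem measurableSet_Ioi] with s hs
      rw [norm_smul, Real.norm_of_nonneg (Real.exp_pos _).le]
      exact mul_le_mul_of_nonneg_left
        (hT.norm_apply_le_mul_norm (mul_nonneg (inv_nonneg.2 hlam.le) (le_of_lt hs)) x)
        (Real.exp_pos _).le
    · simpa using (exp_neg_integrableOn_Ioi 0 one_pos).mul_const (M * ‖x‖)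
    · filter_upwards [ae_restrict_mem measurableSet_Ioi] with s hs
      refine tendsto_const_nhds.smul ?_
      have hscale : Tendsto (fun lam : ℝ => lam⁻¹ * s) atTop (𝓝[≥] 0) := by
        refine tendsto_nhdsWithin_of_tendsto_nhds_of_eventually_within _ ?_ ?_
        · simpa using tendsto_inv_atTop_zero.mul_const s
        · filter_upwards [eventually_gt_atTop 0] with lam hlam
          exact mul_nonneg (inv_nonneg.2 hlam.le) (le_of_lt hs)
      simpa [hT.map_zero', Function.comp_def] using
        ((hT.continuousOn x) 0 self_mem_Ici).tendsto.comp hscale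
  rw [integral_smul_const, integral_exp_neg_Ioi_zero, one_smul] at hdom
  exact hdom.congr' ((eventually_gt_atTop 0).mono fun lam hlam =>
    (smul_laplace_eq_integral T hlam x).symm)

variable {C : X →ₗ[ℂ] X} {S : X →L[ℂ] X}

theorem continuous_map_laplace (hT : IsExpStableSemigroup T M ω)
    (hS : ∀ x, C (laplace T 0 x) = S x) {lam : ℝ} (hlam : 0 < lam) :
    Continuous fun x => C (laplace T lam x) := by
  have hCS : (fun x => C (laplace T lam x)) = fun x => S (x - lam • laplace T lam x) :=
    funext fun x => by rw [← hS, ← hT.laplace_eq_laplace_zero hlam]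
  rw [hCS]
  exact S.continuous.comp (continuous_id.sub ((hT.continuous_laplace hlam.le).const_smul lam))

theorem laplace_map_laplace (hT : IsExpStableSemigroup T M ω)
    (hS : ∀ x, C (laplace T 0 x) = S x)
    (hCT : ∀ t, 0 ≤ t → ∀ y ∈ range (laplace T 0), C (T t y) = T t (C y))
    (hD : ∀ mu, 0 < mu → ∀ x, laplace T mu x ∈ range (laplace T 0))
    {lam mu : ℝ} (hlam : 0 ≤ lam) (hmu : 0 < mu) (x : X) :
    laplace T lam (C (laplace T mu x)) = C (laplace T lam (laplace T mu x)) := by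
  have hST : ∀ t, 0 ≤ t → ∀ y, S (T t y) = T t (S y) := fun t ht y => by
    rw [← hS, ← hT.apply_laplace le_rfl ht, hCT t ht _ ⟨y, rfl⟩, hS]
  obtain ⟨v, hv⟩ := hD mu hmu x
  rw [← hv, hS, hT.laplace_comm hlam le_rfl, hS, hT.map_laplace_of_commute hlam S hST]

theorem map_laplace_eq_of_tendsto (hT : IsExpStableSemigroup T M ω)
    (hS : ∀ x, C (laplace T 0 x) = S x)
    (hCT : ∀ t, 0 ≤ t → ∀ y ∈ range (laplace T 0), C (T t y) = T t (C y))
    (hD : ∀ mu, 0 < mu → ∀ x, laplace T mu x ∈ range (laplace T 0)) {x z : X}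
    (hxz : Tendsto (fun mu : ℝ => mu • C (laplace T mu x)) atTop (𝓝 z)) {lam : ℝ}
    (hlam : 0 < lam) : C (laplace T lam x) = laplace T lam z := by
  have hleft : Tendsto (fun mu : ℝ => C (laplace T lam (mu • laplace T mu x))) atTop
      (𝓝 (C (laplace T lam x))) :=
    ((hT.continuous_map_laplace hS hlam).tendsto x).comp (hT.tendsto_smul_laplace x)
  have hright : Tendsto (fun mu : ℝ => laplace T lam (mu • C (laplace T mu x))) atTop
      (𝓝 (laplace T lam z)) :=
    ((hT.continuous_laplace hlam.le).tendsto z).comp hxz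
  refine tendsto_nhds_unique (hleft.congr' ?_) hright
  filter_upwards [eventually_gt_atTop 0] with mu hmu
  rw [hT.laplace_smul_real hlam.le, LinearMap.map_smul_of_tower,
    ← hT.laplace_map_laplace hS hCT hD hlam.le hmu, hT.laplace_smul_real hlam.le]

theorem tendsto_smul_map_laplace_iff (hT : IsExpStableSemigroup T M ω)
    (hS : ∀ x, C (laplace T 0 x) = S x)
    (hCT : ∀ t, 0 ≤ t → ∀ y ∈ range (laplace T 0), C (T t y) = T t (C y))
    (hD : ∀ mu, 0 < mu → ∀ x, laplace T mu x ∈ range (laplace T 0)) {x z : X} :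
    Tendsto (fun lam : ℝ => lam • C (laplace T lam x)) atTop (𝓝 z) ↔
      ∀ lam, 0 < lam → C (laplace T lam x) = laplace T lam z := by
  refine ⟨fun h lam hlam => hT.map_laplace_eq_of_tendsto hS hCT hD h hlam, fun h => ?_⟩
  exact (hT.tendsto_smul_laplace z).congr' ((eventually_gt_atTop 0).mono fun lam hlam => by
    simp only [h lam hlam])

theorem isClosed_setOf_tendsto_smul_map_laplace (hT : IsExpStableSemigroup T M ω)
    (hS : ∀ x, C (laplace T 0 x) = S x)
    (hCT : ∀ t, 0 ≤ t → ∀ y ∈ range (laplace T 0), C (T t y) = T t (C y))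
    (hD : ∀ mu, 0 < mu → ∀ x, laplace T mu x ∈ range (laplace T 0)) :
    IsClosed {p : X × X |
      Tendsto (fun lam : ℝ => lam • C (laplace T lam p.1)) atTop (𝓝 p.2)} := by
  simp_rw [hT.tendsto_smul_map_laplace_iff hS hCT hD, ofPred_forall]
  exact isClosed_iInter fun lam => isClosed_iInter fun hlam => isClosed_eq
    ((hT.continuous_map_laplace hS hlam).comp continuous_fst)
    ((hT.continuous_laplace hlam.le).comp continuous_snd)

end IsExpStableSemigroup

end

theorem lambda_extension_closed_general
    {X : Type*} [NormedAddCommGroup X] [InnerProductSpace ℂ X] [CompleteSpace X]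
    (T : ℝ → X →L[ℂ] X) (M ω : ℝ) (hω : 0 < ω)
    (hT0 : T 0 = 1)
    (hTsemi : ∀ s t : ℝ, 0 ≤ s → 0 ≤ t → T (s + t) = (T s).comp (T t))
    (hTcont : ∀ x : X, ContinuousOn (fun t => T t x) (Ici (0 : ℝ)))
    (hTexp : ∀ t : ℝ, 0 ≤ t → ‖T t‖ ≤ M * Real.exp (-ω * t))
    (R : X →L[ℂ] X)
    (hR : ∀ x : X, R x = ∫ t in Ioi (0 : ℝ), T t x)
    (Rlam : ℝ → X → X)
    (hRlam : ∀ lam : ℝ, 0 < lam → ∀ x : X,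
      Rlam lam x = ∫ t in Ioi (0 : ℝ), Real.exp (-lam * t) • T t x)
    (hRlamD : ∀ lam : ℝ, 0 < lam → ∀ x : X, Rlam lam x ∈ Set.range R)
    (C : X →ₗ[ℂ] X) (K : ℝ)
    (hCR : ∀ x : X, ‖C (R x)‖ ≤ K * ‖x‖)
    (hCcomm : ∀ t : ℝ, 0 ≤ t → ∀ y ∈ Set.range R, C (T t y) = T t (C y)) :
    ∀ (u : ℕ → X) (l : ℕ → X) (x z : X),
      (∀ n, Tendsto (fun lam : ℝ => lam • C (Rlam lam (u n))) atTop (nhds (l n))) →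
      Tendsto u atTop (nhds x) → Tendsto l atTop (nhds z) →
      Tendsto (fun lam : ℝ => lam • C (Rlam lam x)) atTop (nhds z) := by
  intro u l x z hul hux hlz
  have hT : IsExpStableSemigroup T M ω := ⟨hT0, hTsemi, hTcont, hTexp, hω⟩
  have hR' : ⇑R = laplace T 0 := funext fun y => by rw [hR, laplace_zero]
  have hRlam' : ∀ y, (fun lam : ℝ => lam • C (Rlam lam y)) =ᶠ[atTop]
      fun lam => lam • C (laplace T lam y) :=
    fun y => (eventually_gt_atTop 0).mono fun lam hlam => by
      dsimp only; rw [hRlam lam hlam y]; rfl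
  let S : X →L[ℂ] X := (C ∘ₗ (R : X →ₗ[ℂ] X)).mkContinuous K hCR
  have hS : ∀ y, C (laplace T 0 y) = S y := fun y => by rw [← hR']; rfl
  have hCT : ∀ t, 0 ≤ t → ∀ y ∈ range (laplace T 0), C (T t y) = T t (C y) :=
    hR' ▸ hCcomm
  have hD : ∀ lam, 0 < lam → ∀ y, laplace T lam y ∈ range (laplace T 0) :=
    fun lam hlam y => by simpa only [hRlam lam hlam y, hR', laplace] using hRlamD lam hlam y
  refine (tendsto_congr' (hRlam' x)).2 ?_
  exact (hT.isClosed_setOf_tendsto_smul_map_laplace hS hCT hD).mem_of_tendsto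
    (hux.prodMk_nhds hlz) (Eventually.of_forall fun n => (hul n).congr' (hRlam' (u n)))

/-- The Lambda extension `C_Λ x = lim_{λ → ∞} λ C (R_λ x)`, with
`R_λ = (λI - A)⁻¹` given by `R_λ x = ∫₀^∞ e^{-λt} T t x dt`, of an operator `C` on
`D = range R` which commutes with the exponentially stable semigroup `T`, commutes with
`R`, and is such that `C ∘ R` is bounded, is a closed operator. -/
theorem lambda_extension_closed
    {X : Type*} [NormedAddCommGroup X] [InnerProductSpace ℂ X] [CompleteSpace X]
    (T : ℝ → X →L[ℂ] X) (M ω : ℝ) (hM : 1 ≤ M) (hω : 0 < ω)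
    (hT0 : T 0 = 1)
    (hTsemi : ∀ s t : ℝ, 0 ≤ s → 0 ≤ t → T (s + t) = (T s).comp (T t))
    (hTcont : ∀ x : X, ContinuousOn (fun t => T t x) (Ici (0 : ℝ)))
    (hTexp : ∀ t : ℝ, 0 ≤ t → ‖T t‖ ≤ M * Real.exp (-ω * t))
    (R : X →L[ℂ] X)
    (hR : ∀ x : X, R x = ∫ t in Ioi (0 : ℝ), T t x)
    (hRinj : Function.Injective R)
    (Rlam : ℝ → X → X)
    (hRlam : ∀ lam : ℝ, 0 < lam → ∀ x : X,
      Rlam lam x = ∫ t in Ioi (0 : ℝ), Real.exp (-lam * t) • T t x)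
    (hRlamD : ∀ lam : ℝ, 0 < lam → ∀ x : X, Rlam lam x ∈ Set.range R)
    (C : X →ₗ[ℂ] X) (K : ℝ)
    (hCR : ∀ x : X, ‖C (R x)‖ ≤ K * ‖x‖)
    (hCcomm : ∀ t : ℝ, 0 ≤ t → ∀ y ∈ Set.range R, C (T t y) = T t (C y))
    (hCRcomm : ∀ y ∈ Set.range R, C (R y) = R (C y)) :
    ∀ (u : ℕ → X) (l : ℕ → X) (x z : X),
      (∀ n, Tendsto (fun lam : ℝ => lam • C (Rlam lam (u n))) atTop (nhds (l n))) →
      Tendsto u atTop (nhds x) → Tendsto l atTop (nhds z) →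
      Tendsto (fun lam : ℝ => lam • C (Rlam lam x)) atTop (nhds z) :=
  lambda_extension_closed_general T M ω hω hT0 hTsemi hTcont hTexp R hR Rlam hRlam hRlamD C K hCR
    hCcomm
end

section
/- Let X be a complex Hilbert space and T(t), t ≥ 0, a strongly continuous semigroup on X with ‖T(t)‖ ≤ M for all t ≥ 0. Let D be a dense T-invariant subspace and C : D → X linear, infinite-time admissible with constant m (∫₀^∞ ‖C T(t)x‖² dt ≤ m‖x‖² for x ∈ D) and commuting with the semigroup (C T(t)x = T(t) C x for x ∈ D, t ≥ 0). Suppose in addition that T(t₀) : X → X is surjective for some t₀ > 0 and that D = T(t₀)(D') for some subspace D' ⊆ D. Then C is bounded on D: there exists K ≥ 0 such that ‖C x‖ ≤ K ‖x‖ for all x ∈ D. -/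
/-!
Averaging `‖T t (C v)‖ ≤ M ‖C (T s v)‖` over `s ∈ (0, t]` and using admissibility gives
`‖T t (C v)‖ ≤ √(M²m/t) ‖v‖` on `D` (Theorem 2.2), so each `T t ∘ C` extends to a bounded
operator `B t` on `X`. As `C` commutes with the semigroup, `T s ∘ B t₀ = B s ∘ T t₀`, hence
`T s (B t₀ z) = 0` for every `s > 0` and `z ∈ ker T t₀`, and strong continuity at `0` forces
`B t₀ z = 0`. For `x = T t₀ x'` in `D` this gives `C x = B t₀ x' = B t₀ y` for any `y` with
`T t₀ y = x`, and the open mapping theorem provides such a `y` with `‖y‖ ≤ c ‖x‖`.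
-/

open MeasureTheory Set Filter Topology

theorem mul_le_setIntegral_Ioi_of_le_on_Ioc {g : ℝ → ℝ} {a t : ℝ} (ht : 0 ≤ t)
    (hg : IntegrableOn g (Ioi 0)) (hg0 : ∀ s ∈ Ioi (0 : ℝ), 0 ≤ g s)
    (hle : ∀ s ∈ Ioc 0 t, a ≤ g s) :
    t * a ≤ ∫ s in Ioi 0, g s :=
  calc t * a = ∫ _ in Ioc 0 t, a := by simp [ht]
    _ ≤ ∫ s in Ioc 0 t, g s :=
      setIntegral_mono_on (integrableOn_const measure_Ioc_lt_top.ne)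
        (hg.mono_set Ioc_subset_Ioi_self) measurableSet_Ioc hle
    _ ≤ ∫ s in Ioi 0, g s :=
      setIntegral_mono_set hg (ae_restrict_of_forall_mem measurableSet_Ioi hg0)
        Ioc_subset_Ioi_self.eventuallyLE

theorem LinearMap.exists_continuousLinearMap_eqOn_of_dense_of_norm_le {𝕜 X Y : Type*}
    [NontriviallyNormedField 𝕜] [NormedAddCommGroup X] [NormedSpace 𝕜 X]
    [NormedAddCommGroup Y] [NormedSpace 𝕜 Y] [CompleteSpace Y]
    {D : Submodule 𝕜 X} (hD : Dense (D : Set X)) {f : X →ₗ[𝕜] Y}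
    (hf : ∃ K, ∀ v ∈ D, ‖f v‖ ≤ K * ‖v‖) :
    ∃ B : X →L[𝕜] Y, ∀ v ∈ D, B v = f v := by
  obtain ⟨K, hK⟩ := hf
  refine ⟨(f ∘ₗ D.subtype).extendOfNorm D.subtype, fun v hv => ?_⟩
  have hdense : DenseRange D.subtype := by simpa [DenseRange] using hD
  exact LinearMap.extendOfNorm_eq hdense ⟨K, fun w => hK w w.2⟩ ⟨v, hv⟩

section Semigroup

variable {𝕜 X : Type*} [NontriviallyNormedField 𝕜] [NormedAddCommGroup X] [NormedSpace 𝕜 X]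
  {T : ℝ → X →L[𝕜] X}

theorem eq_zero_of_forall_pos_apply_eq_zero (hT0 : T 0 = 1) {w : X}
    (hcont : ContinuousWithinAt (fun t => T t w) (Ioi 0) 0) (h : ∀ s > 0, T s w = 0) :
    w = 0 := by
  have hlim : Tendsto (fun t => T t w) (𝓝[>] 0) (𝓝 0) :=
    tendsto_const_nhds.congr' (eventually_nhdsWithin_of_forall fun s hs => (h s hs).symm)
  simpa [hT0] using tendsto_nhds_unique hcont.tendsto hlim

theorem norm_semigroup_apply_le_of_admissible {M m t : ℝ} {C : X →ₗ[𝕜] X} {v : X}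
    (hTsemi : ∀ s t : ℝ, 0 ≤ s → 0 ≤ t → T (s + t) = (T s).comp (T t))
    (hM : ∀ t : ℝ, 0 ≤ t → ‖T t‖ ≤ M) (ht : 0 < t)
    (hint : IntegrableOn (fun s => ‖C (T s v)‖ ^ 2) (Ioi 0))
    (hadm : ∫ s in Ioi 0, ‖C (T s v)‖ ^ 2 ≤ m * ‖v‖ ^ 2)
    (hcomm : ∀ s ∈ Ioc 0 t, C (T s v) = T s (C v)) :
    ‖T t (C v)‖ ≤ √(M ^ 2 * m / t) * ‖v‖ := by
  have hpt : ∀ s ∈ Ioc 0 t, ‖T t (C v)‖ ^ 2 ≤ M ^ 2 * ‖C (T s v)‖ ^ 2 := by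
    intro s ⟨hs, hst⟩
    have hsplit : T t (C v) = T (t - s) (C (T s v)) := by
      rw [hcomm s ⟨hs, hst⟩, ← ContinuousLinearMap.comp_apply, ← hTsemi _ _ (by linarith) hs.le,
        sub_add_cancel]
    have : ‖T t (C v)‖ ≤ M * ‖C (T s v)‖ :=
      hsplit ▸ (T (t - s)).le_of_opNorm_le (hM _ (by linarith)) _
    nlinarith [norm_nonneg (T t (C v))]
  have hsq : t * ‖T t (C v)‖ ^ 2 ≤ M ^ 2 * (m * ‖v‖ ^ 2) :=
    calc t * ‖T t (C v)‖ ^ 2 ≤ ∫ s in Ioi 0, M ^ 2 * ‖C (T s v)‖ ^ 2 :=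
          mul_le_setIntegral_Ioi_of_le_on_Ioc ht.le (hint.const_mul _)
            (fun _ _ => by positivity) hpt
      _ = M ^ 2 * ∫ s in Ioi 0, ‖C (T s v)‖ ^ 2 := integral_const_mul _ _
      _ ≤ M ^ 2 * (m * ‖v‖ ^ 2) := by gcongr
  rw [← Real.sqrt_sq (norm_nonneg v), ← Real.sqrt_mul' _ (sq_nonneg _)]
  refine Real.le_sqrt_of_sq_le ?_
  rw [div_mul_eq_mul_div, le_div_iff₀ ht]
  linarith

theorem apply_eq_zero_of_semigroup_apply_eq_zero [CompleteSpace X] (hT0 : T 0 = 1)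
    (hTcont : ∀ x : X, ContinuousOn (fun t => T t x) (Ici (0 : ℝ)))
    {D : Submodule 𝕜 X} (hDdense : Dense (D : Set X)) {C : X →ₗ[𝕜] X} {t₀ : ℝ}
    (hD : ∀ x ∈ D, T t₀ x ∈ D) (hCcomm : ∀ x ∈ D, C (T t₀ x) = T t₀ (C x))
    (hbound : ∀ s > 0, ∃ K, ∀ v ∈ D, ‖T s (C v)‖ ≤ K * ‖v‖)
    {B : X →L[𝕜] X} (hB : ∀ v ∈ D, B v = T t₀ (C v)) {z : X} (hz : T t₀ z = 0) :
    B z = 0 := by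
  refine eq_zero_of_forall_pos_apply_eq_zero hT0
    ((hTcont _ 0 self_mem_Ici).mono Ioi_subset_Ici_self) fun s hs => ?_
  obtain ⟨Bs, hBs⟩ := ((T s).toLinearMap ∘ₗ C).exists_continuousLinearMap_eqOn_of_dense_of_norm_le
    hDdense (hbound s hs)
  have hintertwine : (fun x => T s (B x)) = fun x => Bs (T t₀ x) := by
    refine Continuous.ext_on hDdense (by fun_prop) (by fun_prop) fun v hv => ?_
    simp only [hB v hv, hBs _ (hD v hv), LinearMap.comp_apply, ContinuousLinearMap.coe_coe,
      hCcomm v hv]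
  simpa [hz] using congrFun hintertwine z

end Semigroup

/-- (Remark after Theorem 2.2.) Let `T` be a uniformly bounded strongly
continuous semigroup on `X`, `D` a dense `T`-invariant subspace, and `C` admissible
(constant `m`) on `D` and commuting with the semigroup. If moreover `T t₀` is surjective
for some `t₀ > 0` and `D = T t₀ '' D'` for some subspace `D' ⊆ D`, then `C` is bounded
on `D`. -/
theorem surjective_semigroup_admissible_bounded
    {X : Type*} [NormedAddCommGroup X] [InnerProductSpace ℂ X] [CompleteSpace X]
    (T : ℝ → X →L[ℂ] X) (M : ℝ)
    (hT0 : T 0 = 1)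
    (hTsemi : ∀ s t : ℝ, 0 ≤ s → 0 ≤ t → T (s + t) = (T s).comp (T t))
    (hTcont : ∀ x : X, ContinuousOn (fun t => T t x) (Ici (0 : ℝ)))
    (hM : ∀ t : ℝ, 0 ≤ t → ‖T t‖ ≤ M)
    (D : Submodule ℂ X) (hDdense : Dense (D : Set X))
    (hD : ∀ t : ℝ, 0 ≤ t → ∀ x ∈ D, T t x ∈ D)
    (C : X →ₗ[ℂ] X) (m : ℝ)
    (hCmeas : ∀ x ∈ D, IntegrableOn (fun t => ‖C (T t x)‖ ^ 2) (Ioi (0 : ℝ)))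
    (hCadm : ∀ x ∈ D, ∫ t in Ioi (0 : ℝ), ‖C (T t x)‖ ^ 2 ≤ m * ‖x‖ ^ 2)
    (hCcomm : ∀ t : ℝ, 0 ≤ t → ∀ x ∈ D, C (T t x) = T t (C x))
    (t₀ : ℝ) (ht₀ : 0 < t₀)
    (hsurj : Function.Surjective (T t₀))
    (D' : Submodule ℂ X) (hD'D : D' ≤ D)
    (hDeq : (D : Set X) = (T t₀) '' (D' : Set X)) :
    ∃ K : ℝ, 0 ≤ K ∧ ∀ x ∈ D, ‖C x‖ ≤ K * ‖x‖ := by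
  have hbound : ∀ s > 0, ∃ K, ∀ v ∈ D, ‖T s (C v)‖ ≤ K * ‖v‖ := fun s hs =>
    ⟨_, fun v hv => norm_semigroup_apply_le_of_admissible hTsemi hM hs (hCmeas v hv)
      (hCadm v hv) fun r hr => hCcomm r hr.1.le v hv⟩
  obtain ⟨B, hB⟩ : ∃ B : X →L[ℂ] X, ∀ v ∈ D, B v = T t₀ (C v) :=
    ((T t₀).toLinearMap ∘ₗ C).exists_continuousLinearMap_eqOn_of_dense_of_norm_le hDdense
      (hbound t₀ ht₀)
  have hker : ∀ z, T t₀ z = 0 → B z = 0 := fun z =>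
    apply_eq_zero_of_semigroup_apply_eq_zero hT0 hTcont hDdense (hD t₀ ht₀.le)
      (hCcomm t₀ ht₀.le) hbound hB
  obtain ⟨c, hc, hpre⟩ := (T t₀).exists_preimage_norm_le hsurj
  refine ⟨‖B‖ * c, by positivity, fun x hx => ?_⟩
  obtain ⟨x', hx', rfl⟩ : x ∈ T t₀ '' D' := hDeq ▸ hx
  obtain ⟨y, hy, hyx⟩ := hpre (T t₀ x')
  have hCx : C (T t₀ x') = B y := by
    rw [hCcomm t₀ ht₀.le x' (hD'D hx'), ← sub_eq_zero, ← hB x' (hD'D hx'), ← map_sub]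
    exact hker _ (by rw [map_sub, hy, sub_self])
  calc ‖C (T t₀ x')‖ = ‖B y‖ := by rw [hCx]
    _ ≤ ‖B‖ * (c * ‖T t₀ x'‖) := B.le_of_opNorm_le_of_le le_rfl hyx
    _ = ‖B‖ * c * ‖T t₀ x'‖ := by ring
end

section
/- Let X = ℓ²(ℕ₊; ℂ), let T(t)x = (e^{-n² t} x_n)_n and C x = (n x_n)_n on D = {x : (n x_n)_n ∈ ℓ²}. Then for every n ≥ 1, choosing t = 1/n² and the basis vector e_n (the sequence with 1 in position n and 0 elsewhere), one has C(T(t) e_n) = n e^{-1} e_n, and hence ‖C(T(t)e_n)‖ = e^{-1}/√t · ‖e_n‖. Consequently there is no function ε(t) with ε(t)·√t → 0 as t ↓ 0 such that ‖C T(t)x‖ ≤ ε(t)‖x‖ for all x ∈ D: the estimate ‖C T(t)‖ ≤ γ/√t of Theorem 2.2 cannot be improved. -/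
/-!
On the basis vector `eₙ` the operator `C T(t)` is multiplication by `n e^{-n² t}`, which at
`t = 1/n²` equals `e^{-1}/√t`. Hence any admissible bound `ε` satisfies `ε t * √t ≥ e^{-1}`
along the sequence `t = 1/n² → 0`, so `ε t * √t` cannot tend to `0`.
-/

open Set Filter

/-- The output `C (T t x)` of Example 2.6: coordinatewise `n e^{-n² t} xₙ`, where
`(T t x)ₙ = e^{-n² t} xₙ` is the diagonal semigroup and `(C x)ₙ = n xₙ`. -/
noncomputable def exampleOutput (t : ℝ) (x : lp (fun _ : ℕ+ => ℂ) 2) : ℕ+ → ℂ :=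
  fun n => (n : ℂ) * Real.exp (-(n : ℝ) ^ 2 * t) * x n

open Topology

local notation "ℓ²" => lp (fun _ : ℕ+ => ℂ) 2

theorem lp.coeFn_single_mul {α 𝕜 : Type*} [NormedRing 𝕜] [DecidableEq α] (p : ENNReal)
    (f : α → 𝕜) (i : α) (a : 𝕜) :
    ⇑(lp.single p i (f i * a) : lp (fun _ : α => 𝕜) p) =
      fun j => f j * (lp.single p i a : lp (fun _ : α => 𝕜) p) j :=
  funext fun j => Pi.single_mul_right_apply i j f a

theorem exampleOutput_single (t : ℝ) (n : ℕ+) (c : ℂ) :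
    exampleOutput t (lp.single 2 n c) =
      ⇑(lp.single 2 n ((n : ℂ) * Real.exp (-(n : ℝ) ^ 2 * t) * c) : ℓ²) :=
  (lp.coeFn_single_mul 2 (fun m : ℕ+ => (m : ℂ) * Real.exp (-(m : ℝ) ^ 2 * t)) n c).symm

theorem exampleOutput_one_div_sq_single (n : ℕ+) (c : ℂ) :
    exampleOutput (1 / (n : ℝ) ^ 2) (lp.single 2 n c) =
      ⇑(lp.single 2 n ((n : ℂ) * Real.exp (-1) * c) : ℓ²) := by
  have hn : (n : ℝ) ≠ 0 := by positivity
  rw [exampleOutput_single, neg_mul, mul_one_div_cancel (pow_ne_zero 2 hn)]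

theorem norm_exampleOutput_one_div_sq_single (n : ℕ+)
    (h : Memℓp (exampleOutput (1 / (n : ℝ) ^ 2) (lp.single 2 n 1)) 2) :
    ‖(⟨_, h⟩ : ℓ²)‖ = n * Real.exp (-1) := by
  have hx : (⟨_, h⟩ : ℓ²) = lp.single 2 n ((n : ℂ) * Real.exp (-1) * 1) :=
    lp.ext (exampleOutput_one_div_sq_single n 1)
  rw [hx, lp.norm_single (by norm_num)]
  simp [Complex.norm_exp]

theorem sqrt_one_div_sq {x : ℝ} (hx : 0 ≤ x) : Real.sqrt (1 / x ^ 2) = x⁻¹ := by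
  rw [one_div, Real.sqrt_inv, Real.sqrt_sq hx]

theorem not_tendsto_mul_sqrt_of_le {ε : ℝ → ℝ} {c : ℝ} (hc : 0 < c)
    (h : ∀ n : ℕ+, c ≤ ε (1 / (n : ℝ) ^ 2) * Real.sqrt (1 / (n : ℝ) ^ 2)) :
    ¬ Tendsto (fun t => ε t * Real.sqrt t) (𝓝[>] 0) (𝓝 0) := by
  intro hε
  have ht : Tendsto (fun n : ℕ => 1 / (n : ℝ) ^ 2) atTop (𝓝[>] 0) := by
    simpa only [one_div, Function.comp_def] using tendsto_inv_atTop_nhdsGT_zero.comp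
      ((tendsto_pow_atTop two_ne_zero).comp tendsto_natCast_atTop_atTop)
  have hle : c ≤ 0 := ge_of_tendsto (hε.comp ht)
    (eventually_atTop.2 ⟨1, fun n hn => h ⟨n, hn⟩⟩)
  exact hc.not_ge hle

/-- (Sharpness claim of Example 2.6.) For the diagonal semigroup
`(T t x)ₙ = e^{-n²t} xₙ` on `ℓ²(ℕ₊; ℂ)` and `C` with `(C x)ₙ = n xₙ` on
`D = {x : (n xₙ)ₙ ∈ ℓ²}`: taking `t = 1/n²` and the basis vector `eₙ` one has
`C (T t eₙ) = n e^{-1} eₙ`, hence `‖C (T t eₙ)‖ = (e^{-1}/√t) ‖eₙ‖`; consequently there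
is no `ε` with `ε t * √t → 0` as `t ↓ 0` such that `‖C (T t x)‖ ≤ ε t * ‖x‖` for all
`t > 0` and `x ∈ D`: the estimate `‖C T(t)‖ ≤ γ/√t` cannot be improved. -/
theorem example_estimate_sharp :
    (∀ n : ℕ+, exampleOutput (1 / (n : ℝ) ^ 2) (lp.single 2 n 1) =
      fun m => ((n : ℂ) * Real.exp (-1)) * (lp.single 2 n (1 : ℂ) : lp (fun _ : ℕ+ => ℂ) 2) m) ∧
    (∀ n : ℕ+, ∀ h : Memℓp (exampleOutput (1 / (n : ℝ) ^ 2) (lp.single 2 n 1)) 2,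
      ‖(⟨exampleOutput (1 / (n : ℝ) ^ 2) (lp.single 2 n 1), h⟩ :
          lp (fun _ : ℕ+ => ℂ) 2)‖ =
        (Real.exp (-1) / Real.sqrt (1 / (n : ℝ) ^ 2)) * ‖(lp.single 2 n (1 : ℂ) : lp (fun _ : ℕ+ => ℂ) 2)‖) ∧
    ¬ ∃ ε : ℝ → ℝ,
        Tendsto (fun t => ε t * Real.sqrt t) (nhdsWithin 0 (Ioi (0 : ℝ))) (nhds 0) ∧
        ∀ t : ℝ, 0 < t → ∀ x : lp (fun _ : ℕ+ => ℂ) 2,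
          Memℓp (fun n : ℕ+ => (n : ℂ) * x n) 2 →
          ∀ h : Memℓp (exampleOutput t x) 2,
            ‖(⟨exampleOutput t x, h⟩ : lp (fun _ : ℕ+ => ℂ) 2)‖ ≤ ε t * ‖x‖ := by
  have hnorm_single (n : ℕ+) : ‖(lp.single 2 n (1 : ℂ) : ℓ²)‖ = 1 := by
    rw [lp.norm_single (by norm_num), norm_one]
  refine ⟨fun n => ?_, fun n h => ?_, ?_⟩
  · rw [exampleOutput_one_div_sq_single, lp.coeFn_single_mul 2 (fun _ => (n : ℂ) * Real.exp (-1))]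
  · rw [norm_exampleOutput_one_div_sq_single, hnorm_single, sqrt_one_div_sq (by positivity)]
    field_simp
  · rintro ⟨ε, hε, hbound⟩
    refine not_tendsto_mul_sqrt_of_le (Real.exp_pos (-1)) (fun n => ?_) hε
    have hdom : Memℓp (fun m : ℕ+ => (m : ℂ) * (lp.single 2 n (1 : ℂ) : ℓ²) m) 2 := by
      rw [← lp.coeFn_single_mul]; exact lp.memℓp _
    have hmem : Memℓp (exampleOutput (1 / (n : ℝ) ^ 2) (lp.single 2 n 1)) 2 := by
      rw [exampleOutput_one_div_sq_single]; exact lp.memℓp _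
    have hb := hbound _ (by positivity) _ hdom hmem
    rw [norm_exampleOutput_one_div_sq_single, hnorm_single, mul_one] at hb
    have hn : (0 : ℝ) < n := by positivity
    rwa [sqrt_one_div_sq hn.le, ← div_eq_mul_inv, le_div_iff₀ hn, mul_comm]
end
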